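/- arXiv:1706.00752 — 3 statements merged into one kernel-verified Lean document; each statement's English description precedes it below -/
import Mathlib

section
/- If f : X × X → ℂ and g : X × X → ℂ are both positive definite functions (i.e., their associated matrices are positive definite), then their pointwise product (x,x') ↦ f(x,x') · g(x,x') is positive definite. -/
open Complex Finset ComplexOrder

/-- A function `f : X × X → ℂ` is positive definite if its quadratic form is a
positive real for every nonzero `h : X → ℂ` (in the complex order). -/
def IsPD {X : Type*} [Fintype X] (f : X → X → ℂ) : Prop :=
  ∀ h : X → ℂ, h ≠ 0 → 0 < ∑ x : X, ∑ x' : X, (starRingEnd ℂ) (h x) * f x x' * h x'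

open Matrix

-- quadratic form equals dotProduct
lemma quad_eq_dot {X : Type*} [Fintype X] (f : X → X → ℂ) (h : X → ℂ) :
    ∑ x : X, ∑ x' : X, (starRingEnd ℂ) (h x) * f x x' * h x'
      = dotProduct (star h) (Matrix.of f *ᵥ h) := by
  simp only [dotProduct, Matrix.mulVec, Pi.star_apply, Matrix.of_apply,
    Finset.mul_sum]
  exact Finset.sum_congr rfl fun x _ => Finset.sum_congr rfl fun x' _ => by
    simp [mul_assoc]

lemma isPD_posSemidef {X : Type*} [Fintype X] [DecidableEq X] {f : X → X → ℂ}
    (hf : IsPD f) : (Matrix.of f).PosSemidef := by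
  have key : ∀ h : X → ℂ,
      (starRingEnd ℂ) (∑ x : X, ∑ x' : X, (starRingEnd ℂ) (h x) * f x x' * h x')
        = ∑ x : X, ∑ x' : X, (starRingEnd ℂ) (h x) * f x x' * h x' := by
    intro h
    by_cases hh : h = 0
    · simp [hh]
    · have hlt := hf h hh
      rw [Complex.lt_def] at hlt
      exact Complex.conj_eq_iff_im.mpr hlt.2.symm
  -- the quadratic form of (of f)ᴴ - of f vanishes
  have key2 : ∀ h : X → ℂ,
      ∑ x, ∑ x', (starRingEnd ℂ) (h x) * ((Matrix.of f)ᴴ - Matrix.of f) x x' * h x' = 0 := by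
    intro h
    have e : ∑ x, ∑ x', (starRingEnd ℂ) (h x) * ((Matrix.of f)ᴴ) x x' * h x'
        = (starRingEnd ℂ) (∑ x : X, ∑ x' : X, (starRingEnd ℂ) (h x) * f x x' * h x') := by
      simp only [map_sum, _root_.map_mul, Matrix.conjTranspose_apply, Matrix.of_apply,
        RingHom.id_apply, RingHomCompTriple.comp_apply]
      rw [Finset.sum_comm]
      refine Finset.sum_congr rfl fun x _ => Finset.sum_congr rfl fun x' _ => ?_
      simp only [Complex.conj_conj, starRingEnd_apply, star_star]
      ring
    simp only [Matrix.sub_apply, sub_mul, mul_sub, Finset.sum_sub_distrib]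
    rw [e, key]
    simp
  have herm : (Matrix.of f).IsHermitian := by
    have hT : Matrix.toEuclideanLin ((Matrix.of f)ᴴ - Matrix.of f) = 0 := by
      rw [← inner_map_self_eq_zero]
      intro x
      have hx := key2 x
      rw [Matrix.toEuclideanLin_apply, PiLp.inner_apply]
      simp only [RCLike.inner_apply, Matrix.mulVec, dotProduct, map_sum,
        _root_.map_mul, PiLp.toLp_apply, Finset.sum_mul]
      have hA : ∀ i j, (starRingEnd ℂ) (((Matrix.of f)ᴴ - Matrix.of f) i j)
          = -(((Matrix.of f)ᴴ - Matrix.of f) j i) := by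
        intro i j
        simp [Matrix.sub_apply, Matrix.conjTranspose_apply]
      simp only [Finset.mul_sum]
      refine Eq.trans (Finset.sum_congr rfl fun i _ => Finset.sum_congr rfl fun j _ => mul_comm _ _) ?_
      calc ∑ i, ∑ j, (starRingEnd ℂ) (((Matrix.of f)ᴴ - Matrix.of f) i j) * (starRingEnd ℂ) (x j) * x i
          = -∑ j, ∑ i, (starRingEnd ℂ) (x j) * ((Matrix.of f)ᴴ - Matrix.of f) j i * x i := by
            rw [Finset.sum_comm, ← Finset.sum_neg_distrib]
            refine Finset.sum_congr rfl fun j _ => ?_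
            rw [← Finset.sum_neg_distrib]
            refine Finset.sum_congr rfl fun i _ => ?_
            rw [hA i j]; ring
        _ = 0 := by rw [hx, neg_zero]
    have h0 : (Matrix.of f)ᴴ - Matrix.of f = 0 :=
      (LinearEquiv.map_eq_zero_iff Matrix.toEuclideanLin).mp hT
    unfold Matrix.IsHermitian
    linear_combination (norm := abel) h0
  refine Matrix.PosSemidef.of_dotProduct_mulVec_nonneg herm fun x => ?_
  rw [← quad_eq_dot]
  by_cases hx : x = 0
  · simp [hx]
  · exact (hf x hx).le

-- Gram decomposition
lemma isPD_gram {X : Type*} [Fintype X] [DecidableEq X] {f : X → X → ℂ} (hf : IsPD f) :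
    ∃ B : Matrix X X ℂ, ∀ x x', f x x' = ∑ k, (starRingEnd ℂ) (B k x) * B k x' := by
  obtain ⟨B, hB⟩ : ∃ B : Matrix X X ℂ, Matrix.of f = Bᴴ * B := by
    open scoped MatrixOrder in
    exact CStarAlgebra.nonneg_iff_eq_star_mul_self.mp (isPD_posSemidef hf).nonneg
  refine ⟨B, fun x x' => ?_⟩
  have := congrFun (congrFun hB x) x'
  rw [Matrix.mul_apply] at this
  simp only [Matrix.of_apply, Matrix.conjTranspose_apply, starRingEnd_apply] at this ⊢
  exact this

theorem pd_hadamard_product {X : Type*} [Fintype X] [Nonempty X]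
    (f g : X → X → ℂ) (hf : IsPD f) (hg : IsPD g) :
    IsPD (fun x x' => f x x' * g x x') := by
  classical
  obtain ⟨B, hB⟩ := isPD_gram hf
  intro h hh
  set u : X → X → ℂ := fun k x => B k x * h x with hu
  have step : ∀ x x', (starRingEnd ℂ) (h x) * (f x x' * g x x') * h x'
      = ∑ k, (starRingEnd ℂ) (u k x) * g x x' * u k x' := by
    intro x x'
    rw [hB x x', Finset.sum_mul, Finset.mul_sum, Finset.sum_mul]
    refine Finset.sum_congr rfl fun k _ => ?_
    simp only [hu, _root_.map_mul]
    ring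
  have rearr : ∑ x : X, ∑ x' : X, (starRingEnd ℂ) (h x) * (f x x' * g x x') * h x'
      = ∑ k : X, ∑ x : X, ∑ x' : X, (starRingEnd ℂ) (u k x) * g x x' * u k x' := by
    simp_rw [step]
    rw [show (∑ x : X, ∑ x' : X, ∑ k : X, (starRingEnd ℂ) (u k x) * g x x' * u k x')
        = ∑ x : X, ∑ k : X, ∑ x' : X, (starRingEnd ℂ) (u k x) * g x x' * u k x' from
      Finset.sum_congr rfl fun x _ => Finset.sum_comm]
    exact Finset.sum_comm
  rw [rearr]
  -- find x0 with h x0 ≠ 0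
  obtain ⟨x0, hx0⟩ : ∃ x0, h x0 ≠ 0 := by
    by_contra hc
    push_neg at hc
    exact hh (funext hc)
  -- f x0 x0 > 0
  have hfx0 : 0 < f x0 x0 := by
    have := hf (Pi.single x0 1) (by
      intro hz
      have := congrFun hz x0
      simp [Pi.single_apply] at this)
    simpa [Pi.single_apply, Finset.sum_ite_eq', mul_ite, ite_mul] using this
  -- some k0 with B k0 x0 ≠ 0
  obtain ⟨k0, hk0⟩ : ∃ k0, B k0 x0 ≠ 0 := by
    by_contra hc
    push_neg at hc
    have : f x0 x0 = 0 := by simp [hB x0 x0, hc]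
    rw [this] at hfx0
    exact lt_irrefl _ hfx0
  refine Finset.sum_pos' (fun k _ => ?_) ⟨k0, Finset.mem_univ k0, ?_⟩
  · by_cases hk : u k = 0
    · simp [hk]
    · exact (hg (u k) hk).le
  · refine hg (u k0) ?_
    intro hz
    have := congrFun hz x0
    simp only [hu, Pi.zero_apply] at this
    exact (mul_ne_zero hk0 hx0) this
end

section
/- Let θ be an n×n complex matrix and define 2×2 matrices θ̃_{i,j} with entries θ̃_{i,j}(0,0)=1, θ̃_{i,j}(0,1)=0, θ̃_{i,j}(1,0)=0, θ̃_{i,j}(1,1)=θ_{i,j}. Then the DE-NFG partition sum Z̃ = Σ over assignments x,x' ∈ {0,1}^{n×n} of [Π_i f_i^L(x_{i,·}) f_i^L(x'_{i,·})] · [Π_j f_j^R(x_{·,j}) f_j^R(x'_{·,j})] · Π_{i,j} θ̃_{i,j}(x_{i,j}, x'_{i,j}) equals perm(θ), where f^L (resp. f^R) is the indicator that exactly one entry of its argument row (resp. column) equals 1. -/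
open Complex Finset

/-- The permanent of an `n × n` complex matrix. -/
noncomputable def perm (n : ℕ) (θ : Matrix (Fin n) (Fin n) ℂ) : ℂ :=
  ∑ σ : Equiv.Perm (Fin n), ∏ i : Fin n, θ i (σ i)

/-- Indicator (as a complex number) that exactly one entry of `r` is `true`. -/
def exactlyOne {n : ℕ} (r : Fin n → Bool) : ℂ :=
  if (Finset.univ.filter fun j : Fin n => r j = true).card = 1 then 1 else 0

/-- The `2 × 2` local function `diag(1, θ i j)` evaluated at Boolean indices. -/
def diagTheta {n : ℕ} (θ : Matrix (Fin n) (Fin n) ℂ) (i j : Fin n) (a b : Bool) : ℂ :=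
  if a = b then (if a then θ i j else 1) else 0

lemma exactlyOne_mul_self {n : ℕ} (r : Fin n → Bool) :
    exactlyOne r * exactlyOne r = exactlyOne r := by
  unfold exactlyOne; split <;> simp

lemma existsUnique_of_exactlyOne_ne_zero {n : ℕ} {r : Fin n → Bool}
    (h : exactlyOne r ≠ 0) : ∃! j, r j = true := by
  unfold exactlyOne at h
  split at h
  · next hc =>
    obtain ⟨a, ha⟩ := Finset.card_eq_one.mp hc
    refine ⟨a, ?_, fun y hy => ?_⟩
    · have := ha ▸ Finset.mem_singleton_self a
      simpa using this
    · have hy' : y ∈ Finset.univ.filter (fun j => r j = true) := by simpa using hy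
      rw [ha] at hy'; simpa using hy'
  · exact absurd rfl h

lemma exactlyOne_eq_one {n : ℕ} {r : Fin n → Bool} (h : ∃! j, r j = true) :
    exactlyOne r = 1 := by
  obtain ⟨a, ha, hu⟩ := h
  unfold exactlyOne
  rw [if_pos]
  rw [Finset.card_eq_one]
  exact ⟨a, Finset.eq_singleton_iff_unique_mem.mpr ⟨by simpa using ha,
    fun y hy => hu y (by simpa using hy)⟩⟩

/-- The permutation extracted from a matrix with exactly one `true` per row and column. -/
noncomputable def permOf {n : ℕ} (x : Fin n → Fin n → Bool)
    (hr : ∀ i, ∃! j, x i j = true) (hc : ∀ j, ∃! i, x i j = true) :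
    Equiv.Perm (Fin n) :=
  Equiv.ofBijective (fun i => Fintype.choose _ (hr i))
    (Finite.injective_iff_bijective.mp (by
      intro i1 i2 h
      have h1 : x i1 (Fintype.choose _ (hr i1)) = true := Fintype.choose_spec _ (hr i1)
      have h2 : x i2 (Fintype.choose _ (hr i2)) = true := Fintype.choose_spec _ (hr i2)
      simp only [] at h
      rw [h] at h1
      obtain ⟨w, _, hu⟩ := hc (Fintype.choose _ (hr i2))
      exact (hu i1 h1).trans (hu i2 h2).symm))

lemma permOf_spec {n : ℕ} (x : Fin n → Fin n → Bool)
    (hr : ∀ i, ∃! j, x i j = true) (hc : ∀ j, ∃! i, x i j = true) (i : Fin n) :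
    x i (permOf x hr hc i) = true :=
  Fintype.choose_spec _ (hr i)

lemma permOf_unique {n : ℕ} (x : Fin n → Fin n → Bool)
    (hr : ∀ i, ∃! j, x i j = true) (hc : ∀ j, ∃! i, x i j = true) {i j : Fin n}
    (h : x i j = true) : j = permOf x hr hc i :=
  (hr i).unique h (permOf_spec x hr hc i)

lemma eq_decide {n : ℕ} (x : Fin n → Fin n → Bool)
    (hr : ∀ i, ∃! j, x i j = true) (hc : ∀ j, ∃! i, x i j = true) (i j : Fin n) :
    x i j = decide (permOf x hr hc i = j) := by
  cases hx : x i j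
  · rcases Decidable.eq_or_ne (permOf x hr hc i) j with h | h
    · rw [← h, permOf_spec x hr hc i] at hx; exact absurd hx (by simp)
    · simp [h]
  · rw [← permOf_unique x hr hc hx]; simp

lemma row_prod {n : ℕ} (θ : Matrix (Fin n) (Fin n) ℂ) (x : Fin n → Fin n → Bool)
    (hr : ∀ i, ∃! j, x i j = true) (hc : ∀ j, ∃! i, x i j = true) (i : Fin n) :
    (∏ j : Fin n, (if x i j = true then θ i j else 1)) = θ i (permOf x hr hc i) := by
  rw [Finset.prod_eq_single (permOf x hr hc i)]
  · rw [if_pos (permOf_spec x hr hc i)]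
  · intro j _ hj
    cases hx : x i j
    · simp
    · exact absurd (permOf_unique x hr hc hx) hj
  · intro h; exact absurd (Finset.mem_univ _) h

lemma key_val {n : ℕ} (θ : Matrix (Fin n) (Fin n) ℂ) (x : Fin n → Fin n → Bool)
    (hr : ∀ i, ∃! j, x i j = true) (hc : ∀ j, ∃! i, x i j = true) :
    (∏ i : Fin n, exactlyOne (x i)) * (∏ j : Fin n, exactlyOne (fun i => x i j)) *
      (∏ i : Fin n, ∏ j : Fin n, (if x i j = true then θ i j else 1))
      = ∏ i : Fin n, θ i (permOf x hr hc i) := by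
  rw [Finset.prod_eq_one (fun i _ => exactlyOne_eq_one (hr i)),
    Finset.prod_eq_one (fun j _ => exactlyOne_eq_one (hc j)), one_mul, one_mul]
  exact Finset.prod_congr rfl fun i _ => row_prod θ x hr hc i

lemma toX_rows {n : ℕ} (σ : Equiv.Perm (Fin n)) (i : Fin n) :
    ∃! j, (decide (σ i = j)) = true :=
  ⟨σ i, by simp, fun y hy => by simpa using (of_decide_eq_true hy).symm⟩

lemma toX_cols {n : ℕ} (σ : Equiv.Perm (Fin n)) (j : Fin n) :
    ∃! i, (decide (σ i = j)) = true :=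
  ⟨σ.symm j, by simp, fun y hy => by
    have := of_decide_eq_true hy
    exact σ.injective (by simp [this])⟩

lemma permOf_toX {n : ℕ} (σ : Equiv.Perm (Fin n)) :
    permOf (fun i j => decide (σ i = j)) (toX_rows σ) (toX_cols σ) = σ := by
  ext i
  have := permOf_spec (fun i j => decide (σ i = j)) (toX_rows σ) (toX_cols σ) i
  exact (of_decide_eq_true this).symm ▸ rfl

theorem denfg_partition_sum_eq_permanent (n : ℕ) (θ : Matrix (Fin n) (Fin n) ℂ) :
    (∑ x : Fin n → Fin n → Bool, ∑ x' : Fin n → Fin n → Bool,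
        ((∏ i : Fin n, exactlyOne (x i) * exactlyOne (x' i)) *
         (∏ j : Fin n, exactlyOne (fun i => x i j) * exactlyOne (fun i => x' i j))) *
        ∏ i : Fin n, ∏ j : Fin n, diagTheta θ i j (x i j) (x' i j))
      = perm n θ := by
  have step1 : (∑ x : Fin n → Fin n → Bool, ∑ x' : Fin n → Fin n → Bool,
        ((∏ i : Fin n, exactlyOne (x i) * exactlyOne (x' i)) *
         (∏ j : Fin n, exactlyOne (fun i => x i j) * exactlyOne (fun i => x' i j))) *
        ∏ i : Fin n, ∏ j : Fin n, diagTheta θ i j (x i j) (x' i j))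
      = ∑ x : Fin n → Fin n → Bool,
        (∏ i : Fin n, exactlyOne (x i)) * (∏ j : Fin n, exactlyOne (fun i => x i j)) *
        ∏ i : Fin n, ∏ j : Fin n, (if x i j = true then θ i j else 1) := by
    refine Finset.sum_congr rfl fun x _ => ?_
    rw [Fintype.sum_eq_single x ?_]
    · simp only [exactlyOne_mul_self]
      rw [mul_assoc, mul_assoc]
      congr 2
      refine Finset.prod_congr rfl fun i _ => Finset.prod_congr rfl fun j _ => ?_
      simp [diagTheta]
    · intro x' hne
      have hex : ∃ i j, x i j ≠ x' i j := by
        by_contra hcon; push_neg at hcon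
        exact hne (funext fun i => funext fun j => (hcon i j)).symm
      obtain ⟨i, j, hij⟩ := hex
      have hz : diagTheta θ i j (x i j) (x' i j) = 0 := by
        unfold diagTheta; rw [if_neg hij]
      have hzero : (∏ i : Fin n, ∏ j : Fin n, diagTheta θ i j (x i j) (x' i j)) = 0 :=
        Finset.prod_eq_zero (Finset.mem_univ i)
          (Finset.prod_eq_zero (Finset.mem_univ j) hz)
      rw [hzero, mul_zero]
  rw [step1, perm]
  have hrows : ∀ x : Fin n → Fin n → Bool,
      (∏ i : Fin n, exactlyOne (x i)) * (∏ j : Fin n, exactlyOne (fun i => x i j)) *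
        (∏ i : Fin n, ∏ j : Fin n, (if x i j = true then θ i j else 1)) ≠ 0 →
      (∀ i, ∃! j, x i j = true) ∧ (∀ j, ∃! i, x i j = true) := by
    intro x hx
    have h1 : (∏ i : Fin n, exactlyOne (x i)) ≠ 0 := fun h => hx (by rw [h]; ring)
    have h2 : (∏ j : Fin n, exactlyOne (fun i => x i j)) ≠ 0 := fun h => hx (by rw [h]; ring)
    exact ⟨fun i => existsUnique_of_exactlyOne_ne_zero
        (Finset.prod_ne_zero_iff.mp h1 i (Finset.mem_univ i)),
      fun j => existsUnique_of_exactlyOne_ne_zero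
        (Finset.prod_ne_zero_iff.mp h2 j (Finset.mem_univ j))⟩
  refine Finset.sum_bij_ne_zero
    (fun x _ hx => permOf x (hrows x hx).1 (hrows x hx).2)
    (fun _ _ _ => Finset.mem_univ _) ?_ ?_ ?_
  · intro x1 h11 h12 x2 h21 h22 heq
    replace heq : permOf x1 (hrows x1 h12).1 (hrows x1 h12).2 =
        permOf x2 (hrows x2 h22).1 (hrows x2 h22).2 := heq
    funext i j
    rw [eq_decide x1 (hrows x1 h12).1 (hrows x1 h12).2 i j,
      eq_decide x2 (hrows x2 h22).1 (hrows x2 h22).2 i j, heq]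
  · intro σ _ hσ
    refine ⟨fun i j => decide (σ i = j), Finset.mem_univ _, ?_, ?_⟩
    · rw [key_val θ _ (toX_rows σ) (toX_cols σ), permOf_toX]
      exact hσ
    · show permOf _ _ _ = σ
      exact permOf_toX σ
  · intro x h1 hx
    exact key_val θ x (hrows x hx).1 (hrows x hx).2
end

section
/- Let B be an m×m complex matrix such that the associated map Φ(M)(i,i') = Σ_{j,j'} F(i,j;i',j') M(j,j') comes from a positive definite matrix F (size m²×m²). Then the eigenvalue of B (the reindexing B(i,i';j,j') = F(i,j;i',j')) with maximum absolute value is a positive real number. (Special case m=1: a positive definite 1×1 F gives a positive real B.) -/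
open Complex Finset Matrix Polynomial ComplexOrder

namespace PFPF

variable {m : ℕ}

/-- The completely positive map associated to `F`. -/
noncomputable def Phi (F : Matrix (Fin m × Fin m) (Fin m × Fin m) ℂ)
    (X : Matrix (Fin m) (Fin m) ℂ) : Matrix (Fin m) (Fin m) ℂ :=
  Matrix.of fun i i' => ∑ j, ∑ j', F (i, j) (i', j') * X j j'

/-- Vector to matrix. -/
def toMat (x : Fin m × Fin m → ℂ) : Matrix (Fin m) (Fin m) ℂ :=
  Matrix.of fun i j => x (i, j)

lemma Phi_apply (F : Matrix (Fin m × Fin m) (Fin m × Fin m) ℂ)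
    (X : Matrix (Fin m) (Fin m) ℂ) (i i' : Fin m) :
    Phi F X i i' = ∑ j, ∑ j', F (i, j) (i', j') * X j j' := rfl

lemma Phi_add (F : Matrix (Fin m × Fin m) (Fin m × Fin m) ℂ)
    (X Y : Matrix (Fin m) (Fin m) ℂ) : Phi F (X + Y) = Phi F X + Phi F Y := by
  ext i i'
  simp [Phi_apply, mul_add, Finset.sum_add_distrib]

lemma Phi_smul (F : Matrix (Fin m × Fin m) (Fin m × Fin m) ℂ)
    (c : ℂ) (X : Matrix (Fin m) (Fin m) ℂ) : Phi F (c • X) = c • Phi F X := by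
  ext i i'
  simp only [Phi_apply, Matrix.smul_apply, Matrix.of_apply, smul_eq_mul, Finset.mul_sum]
  exact Finset.sum_congr rfl fun j _ => Finset.sum_congr rfl fun j' _ => by ring

lemma Phi_sub (F : Matrix (Fin m × Fin m) (Fin m × Fin m) ℂ)
    (X Y : Matrix (Fin m) (Fin m) ℂ) : Phi F (X - Y) = Phi F X - Phi F Y := by
  ext i i'
  simp [Phi_apply, mul_sub, Finset.sum_sub_distrib]

/-- Kraus operator. -/
def kraus (C : Matrix (Fin m × Fin m) (Fin m × Fin m) ℂ) (k : Fin m × Fin m) :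
    Matrix (Fin m) (Fin m) ℂ :=
  Matrix.of fun i j => star (C k (i, j))

lemma Phi_eq_kraus {F C : Matrix (Fin m × Fin m) (Fin m × Fin m) ℂ}
    (hFC : F = Cᴴ * C) (X : Matrix (Fin m) (Fin m) ℂ) :
    Phi F X = ∑ k : Fin m × Fin m, kraus C k * X * (kraus C k)ᴴ := by
  ext i i'
  have hF : ∀ p q, F p q = ∑ k, star (C k p) * C k q := by
    intro p q
    rw [hFC]
    simp [Matrix.mul_apply, Matrix.conjTranspose_apply]
  have key : ∀ (f : (Fin m × Fin m) → Fin m → Fin m → ℂ),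
      (∑ j, ∑ j', ∑ k, f k j j') = ∑ k, ∑ j, ∑ j', f k j j' :=
    fun f => (Finset.sum_congr rfl fun j _ => Finset.sum_comm).trans Finset.sum_comm
  have L : Phi F X i i' = ∑ k, ∑ j, ∑ j',
      star (C k (i, j)) * C k (i', j') * X j j' := by
    simp only [Phi_apply, hF, Finset.sum_mul]
    exact key _
  have R : (∑ k : Fin m × Fin m, kraus C k * X * (kraus C k)ᴴ) i i'
      = ∑ k, ∑ j', ∑ j, star (C k (i, j)) * X j j' * C k (i', j') := by
    simp only [Matrix.sum_apply, Matrix.mul_apply, Matrix.conjTranspose_apply, kraus,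
      Matrix.of_apply, star_star, Finset.sum_mul]
  rw [L, R]
  refine Finset.sum_congr rfl fun k _ => ?_
  rw [Finset.sum_comm]
  exact Finset.sum_congr rfl fun j' _ => Finset.sum_congr rfl fun j _ => by ring


lemma posSemidef_sum {ι : Type*} (s : Finset ι) (f : ι → Matrix (Fin m) (Fin m) ℂ)
    (h : ∀ i ∈ s, (f i).PosSemidef) : (∑ i ∈ s, f i).PosSemidef :=
  Finset.sum_induction f _ (fun _ _ ha hb => ha.add hb) Matrix.PosSemidef.zero h

lemma posSemidef_real_smul {M : Matrix (Fin m) (Fin m) ℂ} (hM : M.PosSemidef) {r : ℝ}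
    (hr : 0 ≤ r) : ((r : ℂ) • M).PosSemidef := by
  refine Matrix.PosSemidef.of_dotProduct_mulVec_nonneg ?_ ?_
  · show ((r : ℂ) • M)ᴴ = (r : ℂ) • M
    rw [Matrix.conjTranspose_smul, hM.1]
    congr 1
    simp [Complex.star_def, Complex.conj_ofReal]
  · intro x
    rw [Matrix.smul_mulVec, dotProduct_smul]
    have h0 : (0 : ℂ) ≤ (r : ℂ) := by exact_mod_cast hr
    simpa using mul_nonneg h0 (hM.dotProduct_mulVec_nonneg x)

lemma Phi_posSemidef {F C : Matrix (Fin m × Fin m) (Fin m × Fin m) ℂ}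
    (hFC : F = Cᴴ * C) {X : Matrix (Fin m) (Fin m) ℂ} (hX : X.PosSemidef) :
    (Phi F X).PosSemidef := by
  rw [Phi_eq_kraus hFC]
  exact posSemidef_sum _ _ fun k _ => hX.mul_mul_conjTranspose_same _

lemma quad_conj (D : Matrix (Fin m) (Fin m) ℂ) (v : Fin m → ℂ) :
    dotProduct (star v) ((Dᴴ * D) *ᵥ v)
      = dotProduct (star (D *ᵥ v)) (D *ᵥ v) := by
  rw [Matrix.star_mulVec, Matrix.dotProduct_mulVec, Matrix.dotProduct_mulVec,
    Matrix.vecMul_vecMul]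

lemma quad_kraus (A X : Matrix (Fin m) (Fin m) ℂ) (u : Fin m → ℂ) :
    dotProduct (star u) ((A * X * Aᴴ) *ᵥ u)
      = dotProduct (star (Aᴴ *ᵥ u)) (X *ᵥ (Aᴴ *ᵥ u)) := by
  rw [Matrix.star_mulVec, Matrix.conjTranspose_conjTranspose,
    Matrix.dotProduct_mulVec, Matrix.dotProduct_mulVec, Matrix.dotProduct_mulVec,
    Matrix.vecMul_vecMul, Matrix.vecMul_vecMul, Matrix.mul_assoc]

open scoped MatrixOrder in
lemma psd_eq_ct_mul_self {n : Type*} [Fintype n] [DecidableEq n] {M : Matrix n n ℂ}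
    (hM : M.PosSemidef) : ∃ D : Matrix n n ℂ, M = Dᴴ * D :=
  ⟨CFC.sqrt M, by
    rw [(Matrix.nonneg_iff_posSemidef.mp (CFC.sqrt_nonneg M)).1,
      CFC.sqrt_mul_sqrt_self M hM.nonneg]⟩

open scoped MatrixOrder in
/-- Strict positivity: `Phi` of a nonzero PSD matrix is PD, given `F` PD. -/
lemma Phi_posDef {F : Matrix (Fin m × Fin m) (Fin m × Fin m) ℂ} (hF : F.PosDef)
    {X : Matrix (Fin m) (Fin m) ℂ} (hX : X.PosSemidef) (hX0 : X ≠ 0) :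
    (Phi F X).PosDef := by
  -- Kraus decomposition with invertible C
  set C := CFC.sqrt F with hCdef
  have hCps : C.PosSemidef := Matrix.nonneg_iff_posSemidef.mp (CFC.sqrt_nonneg F)
  have hFC : F = Cᴴ * C := by
    rw [hCps.1]
    exact (CFC.sqrt_mul_sqrt_self F hF.posSemidef.nonneg).symm
  have hCunit : IsUnit C := by
    have hdet : C.det * C.det = F.det := by
      rw [← Matrix.det_mul, CFC.sqrt_mul_sqrt_self F hF.posSemidef.nonneg]
    have : C.det ≠ 0 := by
      intro h
      have := hF.det_pos
      rw [← hdet, h, mul_zero] at this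
      exact lt_irrefl _ this
    exact (Matrix.isUnit_iff_isUnit_det C).2 this.isUnit
  obtain ⟨D, hXD⟩ := psd_eq_ct_mul_self hX
  refine Matrix.PosDef.of_dotProduct_mulVec_pos (Phi_posSemidef hFC hX).1 fun u hu => ?_
  set v : (Fin m × Fin m) → (Fin m → ℂ) := fun k => (kraus C k)ᴴ *ᵥ u with hv
  have key : dotProduct (star u) (Phi F X *ᵥ u)
      = ∑ k, dotProduct (star (v k)) (X *ᵥ v k) := by
    rw [Phi_eq_kraus hFC]
    have h1 : (∑ k : Fin m × Fin m, kraus C k * X * (kraus C k)ᴴ) *ᵥ u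
        = ∑ k, (kraus C k * X * (kraus C k)ᴴ) *ᵥ u := by
      ext i
      simp only [Matrix.mulVec, dotProduct, Matrix.sum_apply, Finset.sum_mul,
        Finset.sum_apply]
      exact Finset.sum_comm
    rw [h1]
    have h2 : dotProduct (star u)
          (∑ k : Fin m × Fin m, (kraus C k * X * (kraus C k)ᴴ) *ᵥ u)
        = ∑ k, dotProduct (star u) ((kraus C k * X * (kraus C k)ᴴ) *ᵥ u) := by
      simp only [dotProduct, Finset.sum_apply, Finset.mul_sum]
      exact Finset.sum_comm
    rw [h2]
    exact Finset.sum_congr rfl fun k _ => quad_kraus _ _ _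
  rw [key]
  -- find k with D *ᵥ v k ≠ 0
  have hDne : D ≠ 0 := by
    intro h
    rw [h] at hXD
    simp at hXD
    exact hX0 hXD
  have hexists : ∃ k, D *ᵥ v k ≠ 0 := by
    by_contra hall
    push_neg at hall
    have hw : ∀ l : Fin m, (fun p : Fin m × Fin m => u p.1 * D l p.2) = 0 := by
      intro l
      have hCw : C *ᵥ (fun p : Fin m × Fin m => u p.1 * D l p.2) = 0 := by
        funext k
        have h1 := congrFun (hall k) l
        simp only [Matrix.mulVec, dotProduct, Pi.zero_apply] at h1 ⊢
        rw [← h1]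
        simp only [hv, Matrix.mulVec, dotProduct, Matrix.conjTranspose_apply,
          kraus, Matrix.of_apply, star_star, Fintype.sum_prod_type]
        rw [Finset.sum_comm]
        refine Finset.sum_congr rfl fun j _ => ?_
        rw [Finset.mul_sum]
        refine Finset.sum_congr rfl fun i _ => ?_
        ring
      have hinj := (Matrix.mulVec_injective_iff_isUnit).2 hCunit
      have := hinj (by rw [hCw, Matrix.mulVec_zero] : C *ᵥ _ = C *ᵥ 0)
      exact this
    obtain ⟨i0, hi0⟩ := Function.ne_iff.mp hu
    apply hDne
    ext l j
    have := congrFun (hw l) (i0, j)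
    simp only [Pi.zero_apply] at this ⊢
    rcases mul_eq_zero.mp this with h | h
    · exact absurd h hi0
    · exact h
  obtain ⟨k0, hk0⟩ := hexists
  refine Finset.sum_pos' (fun k _ => hX.dotProduct_mulVec_nonneg (v k)) ⟨k0, Finset.mem_univ _, ?_⟩
  rw [hXD, quad_conj]
  exact Matrix.dotProduct_star_self_pos_iff.mpr hk0


/-- Cauchy–Schwarz for complex sums. -/
lemma cs_abs {ι : Type*} [Fintype ι] (a b : ι → ℂ) :
    ‖∑ k, star (a k) * b k‖ ≤
      Real.sqrt (∑ k, (‖a k‖)^2) * Real.sqrt (∑ k, (‖b k‖)^2) := by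
  have h1 : ‖∑ k, star (a k) * b k‖
      ≤ ∑ k, ‖a k‖ * ‖b k‖ := by
    refine le_trans (norm_sum_le _ _) ?_
    refine Finset.sum_le_sum fun k _ => ?_
    rw [norm_mul, Complex.star_def, Complex.norm_conj]
  refine h1.trans ?_
  have h2 := Finset.sum_mul_sq_le_sq_mul_sq Finset.univ
    (fun k => ‖a k‖) (fun k => ‖b k‖)
  have h3 : 0 ≤ ∑ k, ‖a k‖ * ‖b k‖ :=
    Finset.sum_nonneg fun k _ => mul_nonneg (norm_nonneg _) (norm_nonneg _)
  calc ∑ k, ‖a k‖ * ‖b k‖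
      = Real.sqrt ((∑ k, ‖a k‖ * ‖b k‖)^2) := (Real.sqrt_sq h3).symm
    _ ≤ Real.sqrt ((∑ k, (‖a k‖)^2) * ∑ k, (‖b k‖)^2) :=
        Real.sqrt_le_sqrt h2
    _ = _ := Real.sqrt_mul (Finset.sum_nonneg fun k _ => sq_nonneg _) _

lemma dot_single (M : Matrix (Fin m) (Fin m) ℂ) (p q : Fin m) :
    dotProduct (star (Pi.single p 1)) (M *ᵥ Pi.single q 1) = M p q := by
  simp [Matrix.mulVec_single, dotProduct, Pi.single_apply, apply_ite]

lemma herm_quad_real {M : Matrix (Fin m) (Fin m) ℂ} (hM : M.IsHermitian) (u : Fin m → ℂ) :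
    dotProduct (star u) (M *ᵥ u)
      = (((dotProduct (star u) (M *ᵥ u)).re : ℝ) : ℂ) := by
  set z := dotProduct (star u) (M *ᵥ u) with hz
  have : (starRingEnd ℂ) z = z := by
    have h1 : star z = dotProduct (star (M *ᵥ u)) u := by
      simp only [hz, dotProduct, star_sum, star_mul', star_star, Pi.star_apply]
      exact Finset.sum_congr rfl fun i _ => mul_comm _ _
    rw [← Complex.star_def, h1, Matrix.star_mulVec, ← Matrix.dotProduct_mulVec, hM]
  exact (Complex.conj_eq_iff_re.mp this).symm

lemma trace_eq (M : Matrix (Fin m) (Fin m) ℂ) : M.trace = ∑ i, M i i := rfl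

lemma psd_diag_nonneg {M : Matrix (Fin m) (Fin m) ℂ} (hM : M.PosSemidef) (i : Fin m) :
    0 ≤ (M i i).re := by
  have h := hM.re_dotProduct_nonneg (Pi.single i 1)
  rwa [dot_single] at h

lemma pd_diag_pos {M : Matrix (Fin m) (Fin m) ℂ} (hM : M.PosDef) (i : Fin m) :
    0 < (M i i).re := by
  have h := hM.re_dotProduct_pos (x := Pi.single i 1) (by
    intro h
    have := congrFun h i
    simp at this)
  rwa [dot_single] at h

lemma herm_trace_real {M : Matrix (Fin m) (Fin m) ℂ} (hM : M.IsHermitian) :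
    M.trace = ((M.trace.re : ℝ) : ℂ) := by
  have h : ∀ i, M i i = (((M i i).re : ℝ) : ℂ) := by
    intro i
    have h1 : (starRingEnd ℂ) (M i i) = M i i := by
      have := congrFun (congrFun hM i) i
      simpa [Matrix.conjTranspose_apply, Complex.star_def] using this
    exact (Complex.conj_eq_iff_re.mp h1).symm
  rw [trace_eq, Finset.sum_congr rfl fun i _ => h i, ← Complex.ofReal_sum]
  simp

lemma pd_trace_pos (hm : 0 < m) {M : Matrix (Fin m) (Fin m) ℂ} (hM : M.PosDef) :
    0 < M.trace.re := by
  rw [trace_eq, Complex.re_sum]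
  exact Finset.sum_pos (fun i _ => pd_diag_pos hM i) ⟨⟨0, hm⟩, Finset.mem_univ _⟩

lemma psd_trace_nonneg {M : Matrix (Fin m) (Fin m) ℂ} (hM : M.PosSemidef) :
    0 ≤ M.trace.re := by
  rw [trace_eq, Complex.re_sum]
  exact Finset.sum_nonneg fun i _ => psd_diag_nonneg hM i

lemma psd_diag_le_trace {M : Matrix (Fin m) (Fin m) ℂ} (hM : M.PosSemidef) (i : Fin m) :
    (M i i).re ≤ M.trace.re := by
  rw [trace_eq, Complex.re_sum]
  exact Finset.single_le_sum (fun j _ => psd_diag_nonneg hM j) (Finset.mem_univ i)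

lemma psd_diag_re_eq {D : Matrix (Fin m) (Fin m) ℂ} (p : Fin m) :
    ((Dᴴ * D) p p).re = ∑ k, (‖D k p‖)^2 := by
  have : (Dᴴ * D) p p = ∑ k, star (D k p) * D k p := by
    simp [Matrix.mul_apply, Matrix.conjTranspose_apply]
  rw [this]
  have h : ∀ k : Fin m, star (D k p) * D k p = (((‖D k p‖)^2 : ℝ) : ℂ) := by
    intro k
    rw [Complex.star_def, ← Complex.normSq_eq_conj_mul_self, Complex.sq_norm]
  rw [Finset.sum_congr rfl fun k _ => h k, ← Complex.ofReal_sum, Complex.ofReal_re]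

/-- entrywise bound for PSD matrices -/
lemma psd_entry_le_trace {M : Matrix (Fin m) (Fin m) ℂ} (hM : M.PosSemidef) (p q : Fin m) :
    ‖M p q‖ ≤ M.trace.re := by
  obtain ⟨D, rfl⟩ := psd_eq_ct_mul_self hM
  have h1 : (Dᴴ * D) p q = ∑ k, star (D k p) * D k q := by
    simp [Matrix.mul_apply, Matrix.conjTranspose_apply]
  rw [h1]
  refine (cs_abs _ _).trans ?_
  rw [← psd_diag_re_eq p, ← psd_diag_re_eq q]
  have htr := psd_trace_nonneg hM
  have h2 : ((Dᴴ * D) p p).re ≤ (Dᴴ * D).trace.re := psd_diag_le_trace hM p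
  have h3 : ((Dᴴ * D) q q).re ≤ (Dᴴ * D).trace.re := psd_diag_le_trace hM q
  calc Real.sqrt ((Dᴴ * D) p p).re * Real.sqrt ((Dᴴ * D) q q).re
      ≤ Real.sqrt ((Dᴴ * D).trace.re) * Real.sqrt ((Dᴴ * D).trace.re) := by
        gcongr
    _ = (Dᴴ * D).trace.re := Real.mul_self_sqrt htr

/-- A PSD matrix with trace at most 1 is at most the identity. -/
lemma psd_le_one {M : Matrix (Fin m) (Fin m) ℂ} (hM : M.PosSemidef) (htr : M.trace.re ≤ 1) :
    ((1 : Matrix (Fin m) (Fin m) ℂ) - M).PosSemidef := by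
  have hHerm : ((1 : Matrix (Fin m) (Fin m) ℂ) - M).IsHermitian := by
    show _ᴴ = _
    rw [Matrix.conjTranspose_sub, Matrix.conjTranspose_one, hM.1]
  refine Matrix.PosSemidef.of_dotProduct_mulVec_nonneg hHerm fun u => ?_
  rw [herm_quad_real hHerm u]
  rw [Complex.zero_le_real]
  · -- re (u* (1 - M) u) = ‖u‖² - re(u* M u) ≥ 0
    obtain ⟨D, rfl⟩ := psd_eq_ct_mul_self hM
    have hexp : dotProduct (star u) (((1 : Matrix (Fin m) (Fin m) ℂ) - Dᴴ * D) *ᵥ u)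
        = dotProduct (star u) u
          - dotProduct (star (D *ᵥ u)) (D *ᵥ u) := by
      rw [Matrix.sub_mulVec, dotProduct_sub, Matrix.one_mulVec, quad_conj]
    rw [hexp, Complex.sub_re]
    have hdot : ∀ w : Fin m → ℂ, (dotProduct (star w) w).re = ∑ j, (‖w j‖)^2 := by
      intro w
      have : dotProduct (star w) w = ∑ j, star (w j) * w j := rfl
      rw [this]
      have h : ∀ j : Fin m, star (w j) * w j = (((‖w j‖)^2 : ℝ) : ℂ) := fun j => by
        rw [Complex.star_def, ← Complex.normSq_eq_conj_mul_self, Complex.sq_norm]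
      rw [Finset.sum_congr rfl fun j _ => h j, ← Complex.ofReal_sum, Complex.ofReal_re]
    rw [hdot u, hdot (D *ᵥ u), sub_nonneg]
    -- row-wise Cauchy–Schwarz
    have hrow : ∀ k : Fin m, (‖(D *ᵥ u) k‖)^2
        ≤ (∑ j, (‖D k j‖)^2) * ∑ j, (‖u j‖)^2 := by
      intro k
      have h1 : (D *ᵥ u) k = ∑ j, star (star (D k j)) * u j := by
        simp [Matrix.mulVec, dotProduct]
      rw [h1]
      have h2 := cs_abs (fun j => star (D k j)) u
      have h3 : ∀ j : Fin m, (‖star (D k j)‖)^2 = (‖D k j‖)^2 := by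
        intro j
        rw [Complex.star_def, Complex.norm_conj]
      calc (‖∑ j, star (star (D k j)) * u j‖)^2
          ≤ (Real.sqrt (∑ j, (‖star (D k j)‖)^2)
              * Real.sqrt (∑ j, (‖u j‖)^2))^2 := by
            have := norm_nonneg (∑ j, star (star (D k j)) * u j)
            exact pow_le_pow_left₀ this h2 2
        _ = (∑ j, (‖star (D k j)‖)^2) * ∑ j, (‖u j‖)^2 := by
            rw [mul_pow, Real.sq_sqrt (Finset.sum_nonneg fun j _ => sq_nonneg _),
              Real.sq_sqrt (Finset.sum_nonneg fun j _ => sq_nonneg _)]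
        _ = (∑ j, (‖D k j‖)^2) * ∑ j, (‖u j‖)^2 := by
            rw [Finset.sum_congr rfl fun j _ => h3 j]
    calc ∑ k, (‖(D *ᵥ u) k‖)^2
        ≤ ∑ k, (∑ j, (‖D k j‖)^2) * ∑ j, (‖u j‖)^2 :=
          Finset.sum_le_sum fun k _ => hrow k
      _ = (∑ k, ∑ j, (‖D k j‖)^2) * ∑ j, (‖u j‖)^2 := by
          rw [Finset.sum_mul]
      _ ≤ 1 * ∑ j, (‖u j‖)^2 := by
          have hsum : (∑ k, ∑ j, (‖D k j‖)^2) = (Dᴴ * D).trace.re := by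
            rw [trace_eq, Complex.re_sum]
            rw [Finset.sum_comm]
            exact Finset.sum_congr rfl fun j _ => (psd_diag_re_eq j).symm
          rw [hsum]
          exact mul_le_mul_of_nonneg_right htr (Finset.sum_nonneg fun j _ => sq_nonneg _)
      _ = ∑ j, (‖u j‖)^2 := one_mul _

/-- A positive definite matrix dominates a positive multiple of the identity. -/
lemma posDef_ge_smul_one (hm : 0 < m) {P : Matrix (Fin m) (Fin m) ℂ} (hP : P.PosDef) :
    ∃ δ : ℝ, 0 < δ ∧ (P - (δ : ℂ) • 1).PosSemidef := by
  have hH := hP.isHermitian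
  have hne : (Finset.univ : Finset (Fin m)).Nonempty := ⟨⟨0, hm⟩, Finset.mem_univ _⟩
  obtain ⟨i0, -, hmin⟩ := Finset.exists_min_image Finset.univ hH.eigenvalues hne
  refine ⟨hH.eigenvalues i0, hP.eigenvalues_pos i0, ?_⟩
  set U := (hH.eigenvectorUnitary : Matrix (Fin m) (Fin m) ℂ) with hUdef
  have hU : U * star U = 1 := (Matrix.mem_unitaryGroup_iff).mp hH.eigenvectorUnitary.2
  set d : Fin m → ℂ := fun i => ((hH.eigenvalues i - hH.eigenvalues i0 : ℝ) : ℂ) with hd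
  have key : P - ((hH.eigenvalues i0 : ℝ) : ℂ) • 1 = U * Matrix.diagonal d * Uᴴ := by
    have hdiag : Matrix.diagonal d
        = Matrix.diagonal (RCLike.ofReal ∘ hH.eigenvalues)
          - ((hH.eigenvalues i0 : ℝ) : ℂ) • 1 := by
      rw [← Matrix.diagonal_one, ← Matrix.diagonal_smul, Matrix.diagonal_sub]
      congr 1
      funext i
      simp [hd, Complex.ofReal_sub]
    rw [hdiag, ← Matrix.star_eq_conjTranspose, Matrix.mul_sub, Matrix.sub_mul]
    have h2 : U * (((hH.eigenvalues i0 : ℝ) : ℂ) • (1 : Matrix (Fin m) (Fin m) ℂ)) * star U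
        = ((hH.eigenvalues i0 : ℝ) : ℂ) • (1 : Matrix (Fin m) (Fin m) ℂ) := by
      rw [Matrix.mul_smul, Matrix.smul_mul, Matrix.mul_one, hU]
    rw [h2]
    congr 1
    conv_lhs => rw [hH.spectral_theorem, Unitary.conjStarAlgAut_apply]
  rw [key]
  refine Matrix.PosSemidef.mul_mul_conjTranspose_same ?_ U
  refine Matrix.PosSemidef.diagonal ?_
  intro i
  have h0 : 0 ≤ hH.eigenvalues i - hH.eigenvalues i0 := sub_nonneg.mpr (hmin i (Finset.mem_univ i))
  show (0:ℂ) ≤ _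
  simp only [hd]
  exact_mod_cast h0


lemma posDef_real_smul {M : Matrix (Fin m) (Fin m) ℂ} (hM : M.PosDef) {r : ℝ}
    (hr : 0 < r) : ((r : ℂ) • M).PosDef := by
  refine Matrix.PosDef.of_dotProduct_mulVec_pos (posSemidef_real_smul hM.posSemidef hr.le).1 fun x hx => ?_
  rw [Matrix.smul_mulVec, dotProduct_smul]
  have h0 : (0 : ℂ) < (r : ℂ) := by exact_mod_cast hr
  simpa using mul_pos h0 (hM.dotProduct_mulVec_pos hx)

lemma isClosed_nonneg_complex : IsClosed {w : ℂ | 0 ≤ w} := by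
  have h : {w : ℂ | 0 ≤ w} = Complex.re ⁻¹' (Set.Ici 0) ∩ Complex.im ⁻¹' {0} := by
    ext w
    simp only [Set.mem_setOf_eq, Set.mem_inter_iff, Set.mem_preimage, Set.mem_Ici,
      Set.mem_singleton_iff, Complex.le_def, Complex.zero_re, Complex.zero_im]
    tauto
  rw [h]
  exact (isClosed_Ici.preimage Complex.continuous_re).inter
    (isClosed_singleton.preimage Complex.continuous_im)

lemma isClosed_psd_cond {α : Type*} [TopologicalSpace α]
    (f : α → Matrix (Fin m) (Fin m) ℂ)
    (hf : ∀ i j, Continuous fun a => f a i j) : IsClosed {a | (f a).PosSemidef} := by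
  have heq : {a | (f a).PosSemidef}
      = (⋂ i, ⋂ j, {a | star (f a j i) = f a i j})
        ∩ (⋂ u : Fin m → ℂ, {a | 0 ≤ dotProduct (star u) (f a *ᵥ u)}) := by
    ext a
    simp only [Set.mem_setOf_eq, Set.mem_inter_iff, Set.mem_iInter]
    constructor
    · intro h
      refine ⟨fun i j => ?_, fun u => h.dotProduct_mulVec_nonneg u⟩
      have := congrFun (congrFun h.1 i) j
      simpa [Matrix.conjTranspose_apply] using this
    · intro h
      refine Matrix.PosSemidef.of_dotProduct_mulVec_nonneg ?_ h.2
      ext i j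
      rw [Matrix.conjTranspose_apply]
      exact h.1 i j
  rw [heq]
  refine IsClosed.inter ?_ ?_
  · refine isClosed_iInter fun i => isClosed_iInter fun j => ?_
    exact isClosed_eq ((hf j i).star) (hf i j)
  · refine isClosed_iInter fun u => ?_
    have hcont : Continuous fun a => dotProduct (star u) (f a *ᵥ u) := by
      simp only [dotProduct, Matrix.mulVec]
      refine continuous_finset_sum _ fun i _ => Continuous.mul continuous_const ?_
      exact continuous_finset_sum _ fun j _ => ((hf i j).mul continuous_const)
    exact isClosed_nonneg_complex.preimage hcont

lemma toMat_entry_continuous (p q : Fin m) :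
    Continuous fun x : (Fin m × Fin m) → ℂ => toMat x p q :=
  continuous_apply (p, q)

/-- Existence of a positive eigenvalue with positive definite eigenvector. -/
lemma exists_pd_eigen (hm : 0 < m) {F : Matrix (Fin m × Fin m) (Fin m × Fin m) ℂ}
    (hF : F.PosDef) :
    ∃ (lam0 : ℝ) (X0 : Matrix (Fin m) (Fin m) ℂ), 0 < lam0 ∧ X0.PosDef ∧
      Phi F X0 = ((lam0 : ℝ) : ℂ) • X0 := by
  classical
  obtain ⟨C, hFC⟩ : ∃ C, F = Cᴴ * C := by
    exact psd_eq_ct_mul_self hF.posSemidef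
  set E := (Fin m × Fin m) → ℂ
  set K : Set E := {x | (toMat x).PosSemidef ∧ (toMat x).trace = 1} with hK
  set T : Set (ℝ × E) := {p | 0 ≤ p.1 ∧ p.2 ∈ K ∧
      (Phi F (toMat p.2) - ((p.1 : ℝ) : ℂ) • toMat p.2).PosSemidef} with hT
  set Cb : ℝ := ∑ i : Fin m, ∑ j : Fin m, ∑ j' : Fin m,
      ‖F (i, j) (i, j')‖ with hCb
  -- entry bound on K
  have hKentry : ∀ x ∈ K, ∀ p q : Fin m, ‖toMat x p q‖ ≤ 1 := by
    intro x hx p q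
    have h1 := psd_entry_le_trace hx.1 p q
    rw [hx.2] at h1
    simpa using h1
  -- bound on t
  have hTbound : ∀ p ∈ T, p.1 ≤ Cb := by
    intro p hp
    obtain ⟨hp0, hpK, hppsd⟩ := hp
    have htr := psd_trace_nonneg hppsd
    have htr1 : (toMat p.2).trace = 1 := hpK.2
    have htrsub : (Phi F (toMat p.2) - ((p.1 : ℝ) : ℂ) • toMat p.2).trace
        = (Phi F (toMat p.2)).trace - ((p.1 : ℝ) : ℂ) := by
      rw [Matrix.trace_sub, Matrix.trace_smul, htr1, smul_eq_mul, mul_one]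
    rw [htrsub] at htr
    simp only [Complex.sub_re, Complex.ofReal_re] at htr
    have h2 : p.1 ≤ (Phi F (toMat p.2)).trace.re := by linarith
    refine h2.trans ?_
    have h3 : (Phi F (toMat p.2)).trace.re ≤ ‖(Phi F (toMat p.2)).trace‖ :=
      Complex.re_le_norm _
    refine h3.trans ?_
    rw [trace_eq]
    refine (norm_sum_le _ _).trans ?_
    rw [hCb]
    refine Finset.sum_le_sum fun i _ => ?_
    rw [Phi_apply]
    refine (norm_sum_le _ _).trans ?_
    refine Finset.sum_le_sum fun j _ => ?_
    refine (norm_sum_le _ _).trans ?_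
    refine Finset.sum_le_sum fun j' _ => ?_
    rw [norm_mul]
    calc ‖F (i, j) (i, j')‖ * ‖toMat p.2 j j'‖
        ≤ ‖F (i, j) (i, j')‖ * 1 := by
          exact mul_le_mul_of_nonneg_left (hKentry p.2 hpK j j') (norm_nonneg _)
      _ = _ := mul_one _
  -- T is closed
  have hTclosed : IsClosed T := by
    have h1 : IsClosed {p : ℝ × E | 0 ≤ p.1} :=
      isClosed_le continuous_const continuous_fst
    have h2 : IsClosed {p : ℝ × E | (toMat p.2).PosSemidef} := by
      refine isClosed_psd_cond _ fun i j => ?_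
      exact (continuous_apply (i, j)).comp continuous_snd
    have h3 : IsClosed {p : ℝ × E | (toMat p.2).trace = 1} := by
      have hcont : Continuous fun p : ℝ × E => (toMat p.2).trace := by
        rw [show (fun p : ℝ × E => (toMat p.2).trace)
            = fun p : ℝ × E => ∑ i, p.2 (i, i) from rfl]
        exact continuous_finset_sum _ fun i _ =>
          (continuous_apply (i, i)).comp continuous_snd
      exact isClosed_eq hcont continuous_const
    have h4 : IsClosed {p : ℝ × E |
        (Phi F (toMat p.2) - ((p.1 : ℝ) : ℂ) • toMat p.2).PosSemidef} := by
      refine isClosed_psd_cond _ fun i j => ?_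
      have hc1 : Continuous fun p : ℝ × E => Phi F (toMat p.2) i j := by
        rw [show (fun p : ℝ × E => Phi F (toMat p.2) i j)
            = fun p : ℝ × E => ∑ a, ∑ b, F (i, a) (j, b) * p.2 (a, b) from rfl]
        refine continuous_finset_sum _ fun a _ => continuous_finset_sum _ fun b _ => ?_
        exact continuous_const.mul ((continuous_apply (a, b)).comp continuous_snd)
      have hc2 : Continuous fun p : ℝ × E => ((p.1 : ℝ) : ℂ) * p.2 (i, j) := by
        exact (Complex.continuous_ofReal.comp continuous_fst).mul
          ((continuous_apply (i, j)).comp continuous_snd)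
      have : (fun p : ℝ × E => (Phi F (toMat p.2) - ((p.1 : ℝ) : ℂ) • toMat p.2) i j)
          = fun p : ℝ × E => Phi F (toMat p.2) i j - ((p.1 : ℝ) : ℂ) * p.2 (i, j) := by
        funext p
        simp [Matrix.sub_apply, Matrix.smul_apply, toMat, smul_eq_mul]
      rw [this]
      exact hc1.sub hc2
    have : T = {p : ℝ × E | 0 ≤ p.1} ∩ ({p : ℝ × E | (toMat p.2).PosSemidef}
        ∩ ({p : ℝ × E | (toMat p.2).trace = 1} ∩ {p : ℝ × E |
        (Phi F (toMat p.2) - ((p.1 : ℝ) : ℂ) • toMat p.2).PosSemidef})) := by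
      ext p
      simp only [hT, hK, Set.mem_setOf_eq, Set.mem_inter_iff]
      tauto
    rw [this]
    exact h1.inter (h2.inter (h3.inter h4))
  -- T is compact
  have hTsub : T ⊆ (Set.Icc (0:ℝ) Cb) ×ˢ Metric.closedBall (0 : E) 1 := by
    intro p hp
    refine Set.mem_prod.mpr ⟨⟨hp.1, hTbound p hp⟩, ?_⟩
    rw [Metric.mem_closedBall, dist_zero_right]
    refine pi_norm_le_iff_of_nonneg zero_le_one |>.mpr fun q => ?_
    exact hKentry p.2 hp.2.1 q.1 q.2
  have hTcompact : IsCompact T :=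
    IsCompact.of_isClosed_subset ((isCompact_Icc).prod (isCompact_closedBall _ _))
      hTclosed hTsub
  -- the identity-based element of K
  set xid : E := fun p => ((m : ℂ)⁻¹) • (1 : Matrix (Fin m) (Fin m) ℂ) p.1 p.2 with hxid
  have hmne : (m : ℂ) ≠ 0 := by
    exact_mod_cast Nat.pos_iff_ne_zero.mp hm
  have hxidMat : toMat xid = ((m : ℂ)⁻¹) • (1 : Matrix (Fin m) (Fin m) ℂ) := by
    ext i j
    simp [toMat, hxid]
  have hxidK : xid ∈ K := by
    constructor
    · rw [hxidMat]
      have : ((m : ℂ)⁻¹) = (((m : ℝ)⁻¹ : ℝ) : ℂ) := by push_cast; ring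
      rw [this]
      exact posSemidef_real_smul Matrix.PosDef.one.posSemidef (by positivity)
    · rw [hxidMat, Matrix.trace_smul, Matrix.trace_one]
      simp only [smul_eq_mul, Fintype.card_fin]
      exact inv_mul_cancel₀ hmne
  have hxidT : ((0:ℝ), xid) ∈ T := by
    refine ⟨le_refl 0, hxidK, ?_⟩
    simp only [Complex.ofReal_zero, zero_smul, sub_zero]
    exact Phi_posSemidef hFC hxidK.1
  set S : Set ℝ := Prod.fst '' T with hS
  have hScompact : IsCompact S := hTcompact.image continuous_fst
  have hSne : S.Nonempty := ⟨0, ⟨(0, xid), hxidT, rfl⟩⟩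
  obtain ⟨p0, hp0T, hp0eq⟩ := hScompact.sSup_mem hSne
  obtain ⟨ht00, hx0K, hZpsd⟩ := hp0T
  have hub : ∀ q ∈ T, q.1 ≤ p0.1 := by
    intro q hq
    rw [hp0eq]
    exact le_csSup hScompact.bddAbove ⟨q, hq, rfl⟩
  -- the improvement step
  have step : ∀ (t : ℝ), 0 ≤ t → ∀ x ∈ K,
      (Phi F (toMat x) - ((t : ℝ) : ℂ) • toMat x).PosDef →
      ∃ δ : ℝ, 0 < δ ∧ ((t + δ : ℝ), x) ∈ T := by
    intro t ht x hx hpd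
    obtain ⟨δ, hδ, hpsd⟩ := posDef_ge_smul_one hm hpd
    refine ⟨δ, hδ, ⟨by simp only; linarith, hx, ?_⟩⟩
    have h1 : ((1 : Matrix (Fin m) (Fin m) ℂ) - toMat x).PosSemidef :=
      psd_le_one hx.1 (by rw [hx.2]; simp)
    have halg : Phi F (toMat x) - (((t + δ : ℝ)) : ℂ) • toMat x
        = ((Phi F (toMat x) - ((t : ℝ) : ℂ) • toMat x) - ((δ : ℝ) : ℂ) • 1)
          + ((δ : ℝ) : ℂ) • ((1 : Matrix (Fin m) (Fin m) ℂ) - toMat x) := by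
      ext i j
      simp only [Matrix.sub_apply, Matrix.add_apply, Matrix.smul_apply, Matrix.one_apply,
        smul_eq_mul, Complex.ofReal_add]
      ring
    rw [halg]
    exact hpsd.add (posSemidef_real_smul h1 hδ.le)
  -- positivity of the maximum
  have hxidne : toMat xid ≠ 0 := by
    intro h
    have h2 := hxidK.2
    rw [h, Matrix.trace_zero] at h2
    exact zero_ne_one h2
  have hlampos : 0 < p0.1 := by
    have hPD : (Phi F (toMat xid) - ((0 : ℝ) : ℂ) • toMat xid).PosDef := by
      simpa using Phi_posDef hF hxidK.1 hxidne
    obtain ⟨δ, hδ, hmem⟩ := step 0 le_rfl xid hxidK hPD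
    have h3 := hub _ hmem
    simp only at h3
    linarith
  have hx0ne : toMat p0.2 ≠ 0 := by
    intro h
    have h2 := hx0K.2
    rw [h, Matrix.trace_zero] at h2
    exact zero_ne_one h2
  have hY1pd : (Phi F (toMat p0.2)).PosDef := Phi_posDef hF hx0K.1 hx0ne
  by_cases hZ : Phi F (toMat p0.2) - ((p0.1 : ℝ) : ℂ) • toMat p0.2 = 0
  · have heig : Phi F (toMat p0.2) = ((p0.1 : ℝ) : ℂ) • toMat p0.2 := by
      rwa [sub_eq_zero] at hZ
    have hX0pd : (toMat p0.2).PosDef := by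
      have hmatEq : toMat p0.2 = (((p0.1)⁻¹ : ℝ) : ℂ) • Phi F (toMat p0.2) := by
        rw [heig, smul_smul]
        have : ((((p0.1)⁻¹ : ℝ)) : ℂ) * ((p0.1 : ℝ) : ℂ) = 1 := by
          push_cast
          exact_mod_cast inv_mul_cancel₀ (ne_of_gt hlampos)
        rw [this, one_smul]
      rw [hmatEq]
      exact posDef_real_smul hY1pd (inv_pos.mpr hlampos)
    exact ⟨p0.1, toMat p0.2, hlampos, hX0pd, heig⟩
  · exfalso
    have hW : (Phi F (Phi F (toMat p0.2) - ((p0.1 : ℝ) : ℂ) • toMat p0.2)).PosDef :=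
      Phi_posDef hF hZpsd hZ
    set Y1 := Phi F (toMat p0.2) with hY1
    set τ := Y1.trace.re with hτdef
    have hτ : 0 < τ := pd_trace_pos hm hY1pd
    set X1 : Matrix (Fin m) (Fin m) ℂ := ((τ⁻¹ : ℝ) : ℂ) • Y1 with hX1
    set x1 : E := fun p => X1 p.1 p.2 with hx1
    have hx1Mat : toMat x1 = X1 := by
      ext i j
      rfl
    have htrY1 : Y1.trace = ((τ : ℝ) : ℂ) := herm_trace_real hY1pd.1
    have hx1K : x1 ∈ K := by
      constructor
      · rw [hx1Mat, hX1]
        exact posSemidef_real_smul hY1pd.posSemidef (inv_nonneg.mpr hτ.le)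
      · rw [hx1Mat, hX1, Matrix.trace_smul, htrY1, smul_eq_mul]
        push_cast
        exact_mod_cast inv_mul_cancel₀ (ne_of_gt hτ)
    have hkey : Phi F X1 - ((p0.1 : ℝ) : ℂ) • X1
        = ((τ⁻¹ : ℝ) : ℂ) • Phi F (Phi F (toMat p0.2) - ((p0.1 : ℝ) : ℂ) • toMat p0.2) := by
      rw [Phi_sub, Phi_smul, hX1, Phi_smul, smul_sub, smul_smul, smul_smul, mul_comm]
    have hpd1 : (Phi F (toMat x1) - ((p0.1 : ℝ) : ℂ) • toMat x1).PosDef := by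
      rw [hx1Mat, hkey]
      exact posDef_real_smul hW (inv_pos.mpr hτ)
    obtain ⟨δ, hδ, hmem⟩ := step p0.1 hlampos.le x1 hx1K hpd1
    have h3 := hub _ hmem
    simp only at h3
    linarith


lemma dot_self_re (w : Fin m → ℂ) :
    (dotProduct (star w) w).re = ∑ j, (‖w j‖)^2 := by
  have h0 : dotProduct (star w) w = ∑ j, star (w j) * w j := rfl
  rw [h0]
  have h : ∀ j : Fin m, star (w j) * w j = (((‖w j‖)^2 : ℝ) : ℂ) := fun j => by
    rw [Complex.star_def, ← Complex.normSq_eq_conj_mul_self, Complex.sq_norm]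
  rw [Finset.sum_congr rfl fun j _ => h j, ← Complex.ofReal_sum, Complex.ofReal_re]

lemma quad_kraus2 (A Z : Matrix (Fin m) (Fin m) ℂ) (u v : Fin m → ℂ) :
    dotProduct (star u) ((A * Z * Aᴴ) *ᵥ v)
      = dotProduct (star (Aᴴ *ᵥ u)) (Z *ᵥ (Aᴴ *ᵥ v)) := by
  rw [Matrix.star_mulVec, Matrix.conjTranspose_conjTranspose,
    Matrix.dotProduct_mulVec, Matrix.dotProduct_mulVec, Matrix.dotProduct_mulVec,
    Matrix.vecMul_vecMul, Matrix.vecMul_vecMul, Matrix.mul_assoc]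

lemma Phi_quad_expand {F C : Matrix (Fin m × Fin m) (Fin m × Fin m) ℂ}
    (hFC : F = Cᴴ * C) (Z : Matrix (Fin m) (Fin m) ℂ) (u v : Fin m → ℂ) :
    dotProduct (star u) (Phi F Z *ᵥ v)
      = ∑ k, dotProduct (star ((kraus C k)ᴴ *ᵥ u)) (Z *ᵥ ((kraus C k)ᴴ *ᵥ v)) := by
  rw [Phi_eq_kraus hFC]
  have h1 : (∑ k : Fin m × Fin m, kraus C k * Z * (kraus C k)ᴴ) *ᵥ v
      = ∑ k, (kraus C k * Z * (kraus C k)ᴴ) *ᵥ v := by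
    ext i
    simp only [Matrix.mulVec, dotProduct, Matrix.sum_apply, Finset.sum_mul,
      Finset.sum_apply]
    exact Finset.sum_comm
  rw [h1]
  have h2 : dotProduct (star u)
        (∑ k : Fin m × Fin m, (kraus C k * Z * (kraus C k)ᴴ) *ᵥ v)
      = ∑ k, dotProduct (star u) ((kraus C k * Z * (kraus C k)ᴴ) *ᵥ v) := by
    simp only [dotProduct, Finset.sum_apply, Finset.mul_sum]
    exact Finset.sum_comm
  rw [h2]
  exact Finset.sum_congr rfl fun k _ => quad_kraus2 _ _ _ _

lemma Phi_iter_psd {F C : Matrix (Fin m × Fin m) (Fin m × Fin m) ℂ}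
    (hFC : F = Cᴴ * C) (n : ℕ) {X : Matrix (Fin m) (Fin m) ℂ} (hX : X.PosSemidef) :
    ((Phi F)^[n] X).PosSemidef := by
  induction n with
  | zero => simpa using hX
  | succ n ih =>
    rw [Function.iterate_succ_apply']
    exact Phi_posSemidef hFC ih

lemma Phi_iter_sub (F : Matrix (Fin m × Fin m) (Fin m × Fin m) ℂ) (n : ℕ)
    (X Y : Matrix (Fin m) (Fin m) ℂ) :
    (Phi F)^[n] (X - Y) = (Phi F)^[n] X - (Phi F)^[n] Y := by
  induction n with
  | zero => simp
  | succ n ih =>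
    rw [Function.iterate_succ_apply', Function.iterate_succ_apply',
      Function.iterate_succ_apply', ih, Phi_sub]

lemma Phi_iter_smul (F : Matrix (Fin m × Fin m) (Fin m × Fin m) ℂ) (n : ℕ) (c : ℂ)
    (X : Matrix (Fin m) (Fin m) ℂ) :
    (Phi F)^[n] (c • X) = c • (Phi F)^[n] X := by
  induction n with
  | zero => simp
  | succ n ih =>
    rw [Function.iterate_succ_apply', Function.iterate_succ_apply', ih, Phi_smul]

lemma Phi_iter_eigen {F : Matrix (Fin m × Fin m) (Fin m × Fin m) ℂ}
    {X0 : Matrix (Fin m) (Fin m) ℂ} {c : ℂ} (h : Phi F X0 = c • X0) (n : ℕ) :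
    (Phi F)^[n] X0 = c ^ n • X0 := by
  induction n with
  | zero => simp
  | succ n ih =>
    rw [Function.iterate_succ_apply', ih, Phi_smul, h, smul_smul, pow_succ, mul_comm]

lemma sum_sqrt_mul_sqrt_le {ι : Type*} [Fintype ι] (a b : ι → ℝ)
    (ha : ∀ k, 0 ≤ a k) (hb : ∀ k, 0 ≤ b k) :
    ∑ k, Real.sqrt (a k) * Real.sqrt (b k)
      ≤ Real.sqrt (∑ k, a k) * Real.sqrt (∑ k, b k) := by
  have h := Finset.sum_mul_sq_le_sq_mul_sq Finset.univ
    (fun k => Real.sqrt (a k)) (fun k => Real.sqrt (b k))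
  have h1 : ∀ k : ι, Real.sqrt (a k) ^ 2 = a k := fun k => Real.sq_sqrt (ha k)
  have h2 : ∀ k : ι, Real.sqrt (b k) ^ 2 = b k := fun k => Real.sq_sqrt (hb k)
  rw [Finset.sum_congr rfl fun k _ => h1 k, Finset.sum_congr rfl fun k _ => h2 k] at h
  have h3 : 0 ≤ ∑ k, Real.sqrt (a k) * Real.sqrt (b k) :=
    Finset.sum_nonneg fun k _ => mul_nonneg (Real.sqrt_nonneg _) (Real.sqrt_nonneg _)
  calc ∑ k, Real.sqrt (a k) * Real.sqrt (b k)
      = Real.sqrt ((∑ k, Real.sqrt (a k) * Real.sqrt (b k))^2) := (Real.sqrt_sq h3).symm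
    _ ≤ Real.sqrt ((∑ k, a k) * ∑ k, b k) := Real.sqrt_le_sqrt h
    _ = _ := Real.sqrt_mul (Finset.sum_nonneg fun k _ => ha k) _

/-- The key iterated Cauchy–Schwarz bound. -/
lemma iter_bound {F C : Matrix (Fin m × Fin m) (Fin m × Fin m) ℂ}
    (hFC : F = Cᴴ * C) (Y : Matrix (Fin m) (Fin m) ℂ) (cY : ℝ) (hcY0 : 0 ≤ cY)
    (hcY : ∀ p q : Fin m → ℂ, ‖dotProduct (star p) (Y *ᵥ q)‖
      ≤ cY * (Real.sqrt ((dotProduct (star p) p).re)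
          * Real.sqrt ((dotProduct (star q) q).re))) :
    ∀ (n : ℕ) (u v : Fin m → ℂ),
      ‖dotProduct (star u) ((Phi F)^[n] Y *ᵥ v)‖
        ≤ cY * (Real.sqrt ((dotProduct (star u) ((Phi F)^[n] 1 *ᵥ u)).re)
            * Real.sqrt ((dotProduct (star v) ((Phi F)^[n] 1 *ᵥ v)).re)) := by
  intro n
  induction n with
  | zero =>
    intro u v
    simpa [Matrix.one_mulVec] using hcY u v
  | succ n ih =>
    intro u v
    rw [Function.iterate_succ_apply' (Phi F) n Y,
      Function.iterate_succ_apply' (Phi F) n 1]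
    rw [Phi_quad_expand hFC _ u v]
    set w : (Fin m × Fin m) → (Fin m → ℂ) := fun k => (kraus C k)ᴴ *ᵥ u with hw
    set z : (Fin m × Fin m) → (Fin m → ℂ) := fun k => (kraus C k)ᴴ *ᵥ v with hz
    set a : (Fin m × Fin m) → ℝ :=
      fun k => (dotProduct (star (w k)) ((Phi F)^[n] 1 *ᵥ w k)).re with haa
    set b : (Fin m × Fin m) → ℝ :=
      fun k => (dotProduct (star (z k)) ((Phi F)^[n] 1 *ᵥ z k)).re with hbb
    have hpsd1 : ((Phi F)^[n] (1 : Matrix (Fin m) (Fin m) ℂ)).PosSemidef :=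
      Phi_iter_psd hFC n Matrix.PosDef.one.posSemidef
    have hann : ∀ k, 0 ≤ a k := fun k => hpsd1.re_dotProduct_nonneg _
    have hbnn : ∀ k, 0 ≤ b k := fun k => hpsd1.re_dotProduct_nonneg _
    have hsum_a : ∑ k, a k
        = (dotProduct (star u) (Phi F ((Phi F)^[n] 1) *ᵥ u)).re := by
      rw [Phi_quad_expand hFC _ u u, Complex.re_sum]
    have hsum_b : ∑ k, b k
        = (dotProduct (star v) (Phi F ((Phi F)^[n] 1) *ᵥ v)).re := by
      rw [Phi_quad_expand hFC _ v v, Complex.re_sum]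
    calc ‖∑ k, dotProduct (star (w k)) ((Phi F)^[n] Y *ᵥ z k)‖
        ≤ ∑ k, ‖dotProduct (star (w k)) ((Phi F)^[n] Y *ᵥ z k)‖ :=
          norm_sum_le _ _
      _ ≤ ∑ k, cY * (Real.sqrt (a k) * Real.sqrt (b k)) :=
          Finset.sum_le_sum fun k _ => ih (w k) (z k)
      _ = cY * ∑ k, Real.sqrt (a k) * Real.sqrt (b k) := by rw [Finset.mul_sum]
      _ ≤ cY * (Real.sqrt (∑ k, a k) * Real.sqrt (∑ k, b k)) := by
          exact mul_le_mul_of_nonneg_left (sum_sqrt_mul_sqrt_le a b hann hbnn) hcY0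
      _ = cY * (Real.sqrt ((dotProduct (star u) (Phi F ((Phi F)^[n] 1) *ᵥ u)).re)
            * Real.sqrt ((dotProduct (star v) (Phi F ((Phi F)^[n] 1) *ᵥ v)).re)) := by
          rw [hsum_a, hsum_b]

/-- Default constant for `iter_bound`. -/
lemma exists_cY (Y : Matrix (Fin m) (Fin m) ℂ) :
    ∀ p q : Fin m → ℂ, ‖dotProduct (star p) (Y *ᵥ q)‖
      ≤ (∑ j, ∑ j', ‖Y j j'‖)
        * (Real.sqrt ((dotProduct (star p) p).re)
          * Real.sqrt ((dotProduct (star q) q).re)) := by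
  intro p q
  have hentry : ∀ (w : Fin m → ℂ) (j : Fin m),
      ‖w j‖ ≤ Real.sqrt ((dotProduct (star w) w).re) := by
    intro w j
    rw [dot_self_re]
    have h1 : (‖w j‖)^2 ≤ ∑ i, (‖w i‖)^2 :=
      Finset.single_le_sum (f := fun i => (‖w i‖)^2)
        (fun i _ => sq_nonneg _) (Finset.mem_univ j)
    have h2 := Real.sqrt_le_sqrt h1
    rwa [Real.sqrt_sq (norm_nonneg _)] at h2
  have h0 : dotProduct (star p) (Y *ᵥ q)
      = ∑ j, ∑ j', star (p j) * (Y j j' * q j') := by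
    simp only [dotProduct, Matrix.mulVec, Pi.star_apply, Finset.mul_sum]
  rw [h0]
  refine (norm_sum_le _ _).trans ?_
  rw [Finset.sum_mul]
  refine Finset.sum_le_sum fun j _ => ?_
  refine (norm_sum_le _ _).trans ?_
  rw [Finset.sum_mul]
  refine Finset.sum_le_sum fun j' _ => ?_
  rw [norm_mul, norm_mul, Complex.star_def, Complex.norm_conj]
  have hpq : ‖p j‖ * ‖q j'‖
      ≤ Real.sqrt ((dotProduct (star p) p).re)
        * Real.sqrt ((dotProduct (star q) q).re) :=
    mul_le_mul (hentry p j) (hentry q j') (norm_nonneg _) (Real.sqrt_nonneg _)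
  calc ‖p j‖ * (‖Y j j'‖ * ‖q j'‖)
      = ‖Y j j'‖ * (‖p j‖ * ‖q j'‖) := by ring
    _ ≤ ‖Y j j'‖ * (Real.sqrt ((dotProduct (star p) p).re)
        * Real.sqrt ((dotProduct (star q) q).re)) :=
      mul_le_mul_of_nonneg_left hpq (norm_nonneg _)


lemma psd_quad_mono {P Q : Matrix (Fin m) (Fin m) ℂ} (h : (Q - P).PosSemidef)
    (u : Fin m → ℂ) :
    (dotProduct (star u) (P *ᵥ u)).re
      ≤ (dotProduct (star u) (Q *ᵥ u)).re := by
  have h2 : 0 ≤ (dotProduct (star u) (Q *ᵥ u)).re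
      - (dotProduct (star u) (P *ᵥ u)).re := by
    have h1 := h.re_dotProduct_nonneg u
    rw [Matrix.sub_mulVec, dotProduct_sub] at h1
    simpa using h1
  linarith

lemma quad_real_smul (r : ℝ) (M : Matrix (Fin m) (Fin m) ℂ) (u : Fin m → ℂ) :
    (dotProduct (star u) ((((r : ℝ) : ℂ) • M) *ᵥ u)).re
      = r * (dotProduct (star u) (M *ᵥ u)).re := by
  rw [Matrix.smul_mulVec, dotProduct_smul, smul_eq_mul]
  simp [Complex.mul_re]

lemma charpoly_root_iff {n : Type*} [Fintype n] [DecidableEq n]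
    (M : Matrix n n ℂ) (μ : ℂ) :
    μ ∈ M.charpoly.roots ↔ ∃ v, v ≠ 0 ∧ M *ᵥ v = μ • v := by
  rw [Polynomial.mem_roots (M.charpoly_monic.ne_zero)]
  have h1 : Polynomial.eval μ M.charpoly
      = ((Matrix.charmatrix M).map (Polynomial.evalRingHom μ)).det := by
    rw [show M.charpoly = (Matrix.charmatrix M).det from rfl]
    have h := RingHom.map_det (Polynomial.evalRingHom μ) (Matrix.charmatrix M)
    rw [RingHom.mapMatrix_apply] at h
    exact h
  have hmap : (Matrix.charmatrix M).map (Polynomial.evalRingHom μ)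
      = μ • (1 : Matrix n n ℂ) - M := by
    ext i j
    by_cases hij : i = j
    · subst hij
      simp [Matrix.charmatrix_apply_eq]
    · simp [Matrix.charmatrix_apply_ne _ _ _ hij, Matrix.one_apply_ne hij]
  have heval : M.charpoly.IsRoot μ ↔ (μ • (1 : Matrix n n ℂ) - M).det = 0 := by
    rw [Polynomial.IsRoot, h1, hmap]
  rw [heval, ← Matrix.exists_mulVec_eq_zero_iff]
  constructor
  · rintro ⟨v, hv, hveq⟩
    refine ⟨v, hv, ?_⟩
    rw [Matrix.sub_mulVec, Matrix.smul_mulVec, Matrix.one_mulVec, sub_eq_zero] at hveq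
    exact hveq.symm
  · rintro ⟨v, hv, hveq⟩
    refine ⟨v, hv, ?_⟩
    rw [Matrix.sub_mulVec, Matrix.smul_mulVec, Matrix.one_mulVec, sub_eq_zero, hveq]

end PFPF

theorem perron_frobenius_dominant_eigenvalue_pos {m : ℕ} (hm : 0 < m)
    (F : Matrix (Fin m × Fin m) (Fin m × Fin m) ℂ) (hF : F.PosDef)
    (B : Matrix (Fin m × Fin m) (Fin m × Fin m) ℂ)
    (hB : ∀ i i' j j' : Fin m, B (i, i') (j, j') = F (i, j) (i', j')) :
    ∃ lam0 : ℝ, 0 < lam0 ∧ (lam0 : ℂ) ∈ B.charpoly.roots ∧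
      ∀ mu ∈ B.charpoly.roots, ‖mu‖ ≤ lam0 := by
  classical
  obtain ⟨C, hFC⟩ : ∃ C, F = Cᴴ * C := by
    exact PFPF.psd_eq_ct_mul_self hF.posSemidef
  obtain ⟨lam0, X0, hlam0, hX0pd, heig⟩ := PFPF.exists_pd_eigen hm hF
  -- relation between B and Phi
  have hBv : ∀ x : Fin m × Fin m → ℂ, B *ᵥ x
      = fun p : Fin m × Fin m => PFPF.Phi F (PFPF.toMat x) p.1 p.2 := by
    intro x
    funext p
    obtain ⟨i, i'⟩ := p
    rw [PFPF.Phi_apply]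
    simp only [Matrix.mulVec, dotProduct]
    rw [Fintype.sum_prod_type]
    exact Finset.sum_congr rfl fun j _ => Finset.sum_congr rfl fun j' _ => by
      rw [hB]; rfl
  have hroot_iff : ∀ μ : ℂ, μ ∈ B.charpoly.roots ↔ ∃ v, v ≠ 0 ∧ B *ᵥ v = μ • v :=
    fun μ => PFPF.charpoly_root_iff B μ
  refine ⟨lam0, hlam0, ?_, ?_⟩
  · -- lam0 is a root
    rw [hroot_iff]
    refine ⟨fun p : Fin m × Fin m => X0 p.1 p.2, ?_, ?_⟩
    · intro h
      have h0 := congrFun h ((⟨0, hm⟩ : Fin m), (⟨0, hm⟩ : Fin m))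
      have h1 := PFPF.pd_diag_pos hX0pd ⟨0, hm⟩
      simp only [Pi.zero_apply] at h0
      rw [show X0 ⟨0, hm⟩ ⟨0, hm⟩ = 0 from h0] at h1
      simp at h1
    · rw [hBv]
      have htm : PFPF.toMat (fun p : Fin m × Fin m => X0 p.1 p.2) = X0 := by
        ext i j; rfl
      rw [htm, heig]
      funext p
      simp [Matrix.smul_apply]
  · intro mu hmu
    rw [hroot_iff] at hmu
    obtain ⟨v, hv, hveig⟩ := hmu
    set Y := PFPF.toMat v with hYdef
    have hPhiY : PFPF.Phi F Y = mu • Y := by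
      ext i i'
      have h1 := congrFun (hBv v) (i, i')
      rw [hveig] at h1
      have h2 : (mu • v) (i, i') = mu * v (i, i') := rfl
      rw [h2] at h1
      rw [← h1]
      rfl
    obtain ⟨δ, hδ, hδpsd⟩ := PFPF.posDef_ge_smul_one hm hX0pd
    have hδinv : ((δ⁻¹ : ℝ) : ℂ) * ((δ : ℝ) : ℂ) = 1 := by
      push_cast
      exact_mod_cast inv_mul_cancel₀ (ne_of_gt hδ)
    have hone_psd : (((δ⁻¹ : ℝ) : ℂ) • X0 - 1).PosSemidef := by
      have heq : ((δ⁻¹ : ℝ) : ℂ) • X0 - 1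
          = ((δ⁻¹ : ℝ) : ℂ) • (X0 - ((δ : ℝ) : ℂ) • 1) := by
        rw [smul_sub, smul_smul, hδinv, one_smul]
      rw [heq]
      exact PFPF.posSemidef_real_smul hδpsd (inv_nonneg.mpr hδ.le)
    set R : ℝ := δ⁻¹ * X0.trace.re with hRdef
    have hX0tr : 0 < X0.trace.re := PFPF.pd_trace_pos hm hX0pd
    have hRpos : 0 < R := mul_pos (inv_pos.mpr hδ) hX0tr
    -- comparison of iterated quadratic forms at basis vectors
    have hcomp : ∀ (n : ℕ) (p : Fin m),
        (dotProduct (star (Pi.single p 1))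
          ((PFPF.Phi F)^[n] 1 *ᵥ Pi.single p 1)).re ≤ R * lam0 ^ n := by
      intro n p
      have hmono : ((δ⁻¹ : ℝ) : ℂ) • ((PFPF.Phi F)^[n] X0) - (PFPF.Phi F)^[n] 1
          = (PFPF.Phi F)^[n] (((δ⁻¹ : ℝ) : ℂ) • X0 - 1) := by
        rw [PFPF.Phi_iter_sub, PFPF.Phi_iter_smul]
      have hpsd2 : (((δ⁻¹ : ℝ) : ℂ) • ((PFPF.Phi F)^[n] X0)
          - (PFPF.Phi F)^[n] 1).PosSemidef := by
        rw [hmono]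
        exact PFPF.Phi_iter_psd hFC n hone_psd
      have hq := PFPF.psd_quad_mono hpsd2 (Pi.single p 1)
      have hiter : (PFPF.Phi F)^[n] X0 = ((lam0 ^ n : ℝ) : ℂ) • X0 := by
        rw [PFPF.Phi_iter_eigen heig n]
        norm_cast
      have hsmul : ((δ⁻¹ : ℝ) : ℂ) • ((PFPF.Phi F)^[n] X0)
          = (((δ⁻¹ * lam0 ^ n : ℝ)) : ℂ) • X0 := by
        rw [hiter, smul_smul]
        push_cast
        ring_nf
      rw [hsmul] at hq
      rw [PFPF.quad_real_smul, PFPF.dot_single, PFPF.dot_single] at hq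
      rw [PFPF.dot_single]
      refine hq.trans ?_
      have hdle := PFPF.psd_diag_le_trace hX0pd.posSemidef p
      calc δ⁻¹ * lam0 ^ n * (X0 p p).re
          ≤ δ⁻¹ * lam0 ^ n * X0.trace.re := by
            refine mul_le_mul_of_nonneg_left hdle ?_
            positivity
        _ = R * lam0 ^ n := by rw [hRdef]; ring
    -- choose a nonzero entry of Y
    obtain ⟨p0, hp0⟩ := Function.ne_iff.mp hv
    have ha : 0 < ‖v p0‖ := by
      simpa using hp0
    set cY : ℝ := ∑ j, ∑ j', ‖Y j j'‖ with hcYdef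
    have hcY0 : 0 ≤ cY :=
      Finset.sum_nonneg fun j _ => Finset.sum_nonneg fun j' _ => norm_nonneg _
    have hbound : ∀ n : ℕ, (‖mu‖) ^ n * ‖v p0‖
        ≤ cY * (R * lam0 ^ n) := by
      intro n
      have h1 := PFPF.iter_bound hFC Y cY hcY0 (PFPF.exists_cY Y) n
        (Pi.single p0.1 1) (Pi.single p0.2 1)
      have hYiter : (PFPF.Phi F)^[n] Y = mu ^ n • Y := PFPF.Phi_iter_eigen hPhiY n
      have hlhs : dotProduct (star (Pi.single p0.1 1))
          ((PFPF.Phi F)^[n] Y *ᵥ Pi.single p0.2 1) = mu ^ n * Y p0.1 p0.2 := by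
        rw [hYiter, Matrix.smul_mulVec, dotProduct_smul, smul_eq_mul,
          PFPF.dot_single]
      rw [hlhs] at h1
      have hYv : Y p0.1 p0.2 = v p0 := by
        rw [hYdef]
        rfl
      rw [norm_mul, norm_pow, hYv] at h1
      refine h1.trans ?_
      have hq1 := hcomp n p0.1
      have hq2 := hcomp n p0.2
      have hpsd1 : ((PFPF.Phi F)^[n] (1 : Matrix (Fin m) (Fin m) ℂ)).PosSemidef :=
        PFPF.Phi_iter_psd hFC n Matrix.PosDef.one.posSemidef
      have hs1 : Real.sqrt ((dotProduct (star (Pi.single p0.1 1))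
          ((PFPF.Phi F)^[n] 1 *ᵥ Pi.single p0.1 1)).re) ≤ Real.sqrt (R * lam0 ^ n) :=
        Real.sqrt_le_sqrt hq1
      have hs2 : Real.sqrt ((dotProduct (star (Pi.single p0.2 1))
          ((PFPF.Phi F)^[n] 1 *ᵥ Pi.single p0.2 1)).re) ≤ Real.sqrt (R * lam0 ^ n) :=
        Real.sqrt_le_sqrt hq2
      have hmul : Real.sqrt ((dotProduct (star (Pi.single p0.1 1))
            ((PFPF.Phi F)^[n] 1 *ᵥ Pi.single p0.1 1)).re)
          * Real.sqrt ((dotProduct (star (Pi.single p0.2 1))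
            ((PFPF.Phi F)^[n] 1 *ᵥ Pi.single p0.2 1)).re)
          ≤ Real.sqrt (R * lam0 ^ n) * Real.sqrt (R * lam0 ^ n) :=
        mul_le_mul hs1 hs2 (Real.sqrt_nonneg _) (Real.sqrt_nonneg _)
      rw [Real.mul_self_sqrt (by positivity : (0:ℝ) ≤ R * lam0 ^ n)] at hmul
      exact mul_le_mul_of_nonneg_left hmul hcY0
    -- conclude
    by_contra hgt
    push_neg at hgt
    have hρ : 1 < ‖mu‖ / lam0 := (one_lt_div hlam0).mpr hgt
    obtain ⟨n, hn⟩ := pow_unbounded_of_one_lt (cY * R / ‖v p0‖) hρ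
    rw [div_pow] at hn
    have hlampow : 0 < lam0 ^ n := pow_pos hlam0 n
    rw [div_lt_div_iff₀ ha hlampow] at hn
    have hb := hbound n
    nlinarith [hb, hn]
end
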